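/- arXiv:0903.4898 — 3 statements merged into one kernel-verified Lean document; each statement's English description precedes it below -/
import Mathlib

section
/- Let (N_r)_{r=1}^{M} be integrable nonnegative integer-valued random variables, N = ∑_r N_r with E[N] < ∞, and let (a_r^{(i)})_{i ≥ 1} be arrays of reals with 0 ≤ a_r^{(i)} ≤ q̄_i where q̄_i → 0 as i → ∞. Suppose ∑_r a_r^{(i)} E[N_r] = c_i with c_i / q̄_i bounded below by a positive constant. Then lim inf_{i → ∞} E[1 - e^{-∑_r a_r^{(i)} N_r}] / c_i ≥ 1. -/
/-!
Since `0 ≤ x - (1 - e^{-x}) ≤ x · min 1 x` and `S_i := ∑_r a_r^{(i)} N_r ≤ q̄_i N`, the loss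
`E[S_i] - E[1 - e^{-S_i}]` is at most `q̄_i · E[N · min 1 (q̄_i N)]`. The last expectation tends to
zero by dominated convergence (dominated by `N`), and `q̄_i / c_i ≤ 1/δ`, so the ratio
`E[1 - e^{-S_i}] / c_i`, which never exceeds `1`, tends to `1`.
-/

open MeasureTheory Filter Topology

namespace Real

lemma one_sub_exp_neg_le (x : ℝ) : 1 - exp (-x) ≤ x := by
  linarith [add_one_le_exp (-x)]

lemma sub_one_sub_exp_neg_le_mul_min {x : ℝ} (hx : 0 ≤ x) :
    x - (1 - exp (-x)) ≤ x * min 1 x := by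
  rcases le_total x 1 with hx1 | hx1
  · have hsmall := abs_exp_sub_one_sub_id_le (x := -x) (by rwa [abs_neg, abs_of_nonneg hx])
    rw [neg_sq] at hsmall
    rw [min_eq_right hx1]
    linarith [(abs_le.1 hsmall).2]
  · rw [min_eq_left hx1]
    linarith [exp_le_one_iff.2 (neg_nonpos.2 hx)]

end Real

lemma norm_mul_min_one_mul_le {x q : ℝ} (hx : 0 ≤ x) (hq : 0 ≤ q) : ‖x * min 1 (q * x)‖ ≤ x := by
  rw [Real.norm_eq_abs, abs_of_nonneg (mul_nonneg hx (le_min zero_le_one (mul_nonneg hq hx)))]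
  exact mul_le_of_le_one_right hx (min_le_left _ _)

section

open Real

variable {Ω : Type*} [MeasurableSpace Ω] {μ : Measure Ω} {X : Ω → ℝ}

lemma MeasureTheory.Integrable.mul_min_one_const_mul (hX : Integrable X μ) (hX0 : 0 ≤ X) {q : ℝ}
    (hq : 0 ≤ q) :
    Integrable (fun ω => X ω * min 1 (q * X ω)) μ :=
  hX.mono' ((continuous_id.mul (continuous_const.min (continuous_const.mul continuous_id))
      ).comp_aestronglyMeasurable hX.aestronglyMeasurable)
    (ae_of_all _ fun ω => norm_mul_min_one_mul_le (hX0 ω) hq)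

lemma tendsto_integral_mul_min_one_mul {ι : Type*} {l : Filter ι} [l.IsCountablyGenerated]
    (hX : Integrable X μ) (hX0 : 0 ≤ X) {q : ι → ℝ} (hq0 : ∀ i, 0 ≤ q i)
    (hq : Tendsto q l (𝓝 0)) :
    Tendsto (fun i => ∫ ω, X ω * min 1 (q i * X ω) ∂μ) l (𝓝 0) := by
  have hint := fun i => hX.mul_min_one_const_mul hX0 (hq0 i)
  have hlim : ∀ ω, Tendsto (fun i => X ω * min 1 (q i * X ω)) l (𝓝 0) := fun ω => by
    simpa using (tendsto_const_nhds (x := X ω)).mul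
      ((tendsto_const_nhds (x := (1 : ℝ))).min (hq.mul_const (X ω)))
  simpa using tendsto_integral_filter_of_dominated_convergence X
    (Eventually.of_forall fun i => (hint i).aestronglyMeasurable)
    (Eventually.of_forall fun i => ae_of_all _ fun ω => norm_mul_min_one_mul_le (hX0 ω) (hq0 i))
    hX (ae_of_all _ hlim)

lemma MeasureTheory.Integrable.one_sub_exp_neg {S : Ω → ℝ} (hS : Integrable S μ) (hS0 : 0 ≤ S) :
    Integrable (fun ω => 1 - exp (-S ω)) μ :=
  hS.mono' ((continuous_const.sub (continuous_exp.comp continuous_neg)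
      ).comp_aestronglyMeasurable hS.aestronglyMeasurable)
    (ae_of_all _ fun ω => by
      rw [norm_eq_abs, abs_of_nonneg (sub_nonneg.2 (exp_le_one_iff.2 (neg_nonpos.2 (hS0 ω))))]
      exact one_sub_exp_neg_le _)

lemma integral_sub_integral_one_sub_exp_neg_le (hX : Integrable X μ) (hX0 : 0 ≤ X)
    {S : Ω → ℝ} (hS : Integrable S μ) (hS0 : 0 ≤ S) {q : ℝ} (hq : 0 ≤ q)
    (hSX : ∀ ω, S ω ≤ q * X ω) :
    ∫ ω, S ω ∂μ - ∫ ω, 1 - exp (-S ω) ∂μ ≤ q * ∫ ω, X ω * min 1 (q * X ω) ∂μ := by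
  have hf := hS.one_sub_exp_neg hS0
  rw [← integral_sub hS hf, ← integral_const_mul]
  refine integral_mono (hS.sub hf) ((hX.mul_min_one_const_mul hX0 hq).const_mul q) fun ω => ?_
  have hS0ω : 0 ≤ S ω := hS0 ω
  calc S ω - (1 - exp (-S ω)) ≤ S ω * min 1 (S ω) := sub_one_sub_exp_neg_le_mul_min hS0ω
    _ ≤ q * X ω * min 1 (q * X ω) :=
      mul_le_mul (hSX ω) (min_le_min_left 1 (hSX ω)) (le_min zero_le_one hS0ω)
        (hS0ω.trans (hSX ω))
    _ = q * (X ω * min 1 (q * X ω)) := mul_assoc _ _ _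

theorem tendsto_integral_one_sub_exp_neg_div_integral {ι : Type*} {l : Filter ι}
    [l.IsCountablyGenerated] (hX : Integrable X μ) (hX0 : 0 ≤ X) {S : ι → Ω → ℝ}
    (hS : ∀ i, Integrable (S i) μ) (hS0 : ∀ i, 0 ≤ S i) {q : ι → ℝ} (hq : ∀ i, 0 < q i)
    (hq_lim : Tendsto q l (𝓝 0)) (hSX : ∀ i ω, S i ω ≤ q i * X ω) {δ : ℝ} (hδ : 0 < δ)
    (hδS : ∀ i, δ * q i ≤ ∫ ω, S i ω ∂μ) :
    Tendsto (fun i => (∫ ω, 1 - exp (-S i ω) ∂μ) / ∫ ω, S i ω ∂μ) l (𝓝 1) := by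
  set e := fun i => ∫ ω, X ω * min 1 (q i * X ω) ∂μ
  have he : Tendsto (fun i => 1 - e i / δ) l (𝓝 1) := by
    simpa using tendsto_const_nhds.sub
      ((tendsto_integral_mul_min_one_mul hX hX0 (fun i => (hq i).le) hq_lim).div_const δ)
  refine tendsto_of_tendsto_of_tendsto_of_le_of_le he tendsto_const_nhds (fun i => ?_) fun i => ?_
  · have hc : 0 < ∫ ω, S i ω ∂μ := (mul_pos hδ (hq i)).trans_le (hδS i)
    have he0 : 0 ≤ e i := integral_nonneg fun ω =>
      mul_nonneg (hX0 ω) (le_min zero_le_one (mul_nonneg (hq i).le (hX0 ω)))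
    have hgap := integral_sub_integral_one_sub_exp_neg_le hX hX0 (hS i) (hS0 i) (hq i).le (hSX i)
    have hqe : q i * e i ≤ e i / δ * ∫ ω, S i ω ∂μ := by
      rw [div_mul_eq_mul_div, le_div_iff₀ hδ]
      nlinarith [mul_le_mul_of_nonneg_left (hδS i) he0]
    rw [le_div_iff₀ hc]
    linarith
  · exact div_le_one_of_le₀ (integral_mono ((hS i).one_sub_exp_neg (hS0 i)) (hS i)
      fun ω => one_sub_exp_neg_le _) (integral_nonneg (hS0 i))

end

theorem lower_bound_liminf_general
    {Ω : Type*} [MeasurableSpace Ω] (μ : Measure Ω)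
    (M : ℕ) (N : Fin M → Ω → ℕ)
    (hNint : ∀ r, Integrable (fun ω => (N r ω : ℝ)) μ)
    (a : ℕ → Fin M → ℝ) (qbar : ℕ → ℝ) (hqbar_pos : ∀ i, 0 < qbar i)
    (hqbar_zero : Tendsto qbar atTop (nhds 0))
    (ha : ∀ i r, 0 ≤ a i r ∧ a i r ≤ qbar i)
    (c : ℕ → ℝ)
    (hc : ∀ i, c i = ∑ r, a i r * ∫ ω, (N r ω : ℝ) ∂μ)
    (δ : ℝ) (hδ : 0 < δ) (hc_below : ∀ i, δ ≤ c i / qbar i) :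
    1 ≤ atTop.liminf (fun i =>
      (∫ ω, (1 - Real.exp (-(∑ r, a i r * (N r ω : ℝ)))) ∂μ) / c i) := by
  have hS_int : ∀ i, Integrable (fun ω => ∑ r, a i r * (N r ω : ℝ)) μ :=
    fun i => integrable_finsetSum _ fun r _ => (hNint r).const_mul _
  have hS_integral : ∀ i, ∫ ω, ∑ r, a i r * (N r ω : ℝ) ∂μ = c i := fun i => by
    rw [hc i, integral_finsetSum _ fun r _ => (hNint r).const_mul _]
    simp_rw [integral_const_mul]
  have hS_le : ∀ i ω, ∑ r, a i r * (N r ω : ℝ) ≤ qbar i * ∑ r, (N r ω : ℝ) := fun i ω => by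
    rw [Finset.mul_sum]
    exact Finset.sum_le_sum fun r _ => mul_le_mul_of_nonneg_right (ha i r).2 (Nat.cast_nonneg _)
  have hratio := tendsto_integral_one_sub_exp_neg_div_integral
    (integrable_finsetSum _ fun r _ => hNint r)
    (fun ω => Finset.sum_nonneg fun r _ => Nat.cast_nonneg _) hS_int
    (fun i ω => Finset.sum_nonneg fun r _ => mul_nonneg (ha i r).1 (Nat.cast_nonneg _))
    hqbar_pos hqbar_zero hS_le hδ
    fun i => (hS_integral i).symm ▸ (le_div_iff₀ (hqbar_pos i)).1 (hc_below i)
  simp only [hS_integral] at hratio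
  exact hratio.liminf_eq.ge

/-- Lower-bound step in the proof of Lemma 1: if `0 ≤ a i r ≤ q̄ i → 0`,
`c i = ∑_r a i r E[N_r]` with `c i / q̄ i` bounded below by a positive constant, and
`N = ∑_r N_r` is integrable, then `liminf_i E[1 - exp(-∑_r a i r N_r)] / c i ≥ 1`. -/
theorem lower_bound_liminf
    {Ω : Type*} [MeasurableSpace Ω] (μ : Measure Ω) [IsProbabilityMeasure μ]
    (M : ℕ) (N : Fin M → Ω → ℕ)
    (hNmeas : ∀ r, Measurable (N r))
    (hNint : ∀ r, Integrable (fun ω => (N r ω : ℝ)) μ)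
    (a : ℕ → Fin M → ℝ) (qbar : ℕ → ℝ) (hqbar_pos : ∀ i, 0 < qbar i)
    (hqbar_zero : Tendsto qbar atTop (nhds 0))
    (ha : ∀ i r, 0 ≤ a i r ∧ a i r ≤ qbar i)
    (c : ℕ → ℝ)
    (hc : ∀ i, c i = ∑ r, a i r * ∫ ω, (N r ω : ℝ) ∂μ)
    (δ : ℝ) (hδ : 0 < δ) (hc_below : ∀ i, δ ≤ c i / qbar i) :
    1 ≤ atTop.liminf (fun i =>
      (∫ ω, (1 - Real.exp (-(∑ r, a i r * (N r ω : ℝ)))) ∂μ) / c i) :=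
  lower_bound_liminf_general μ M N hNint a qbar hqbar_pos hqbar_zero ha c hc δ hδ hc_below
end

section
/- Under the semi-Markov modulated request model (finite modulating state space, stationary ergodic, conditionally independent requests given the modulating process, regenerative points 𝒯₁ < 𝒯₂ with E[𝒯₂ - 𝒯₁] < ∞, marginal request probabilities q_i > 0 nonincreasing with q_i → 0), the probability that document i is requested at least once during a regenerative cycle satisfies P[i ∈ 𝓡(𝒯₁, 𝒯₂)] ∼ q_i · E[𝒯₂ - 𝒯₁] as i → ∞. -/
open MeasureTheory Filter Finset

/-!
Let `S = ∑ r N_r q_i^{(r)}`, whose mean is `q_i E[𝒯₂ - 𝒯₁]`. Pointwise,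
`S - S² ≤ 1 - ∏ r (1 - q_i^{(r)})^{N_r} ≤ S` (Bernoulli's inequality above, `1 - x ≤ e^{-x}`
below), and `S ≤ q_i C` with `C = ∑ r N_r / π_r` integrable, because `π_r q_i^{(r)} ≤ q_i`.
So the error `S - (1 - ∏ r (1 - q_i^{(r)})^{N_r})`, divided by `q_i`, is dominated by `C` and
at most `q_i C² → 0`; by dominated convergence its mean is `o(q_i)`.
-/

lemma AEMeasurable.of_natCast {Ω : Type*} [MeasurableSpace Ω] {μ : Measure Ω} {N : Ω → ℕ}
    (h : AEMeasurable (fun ω => (N ω : ℝ)) μ) : AEMeasurable N μ := by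
  simpa [Function.comp_def] using Nat.measurable_floor.comp_aemeasurable h

lemma Real.exp_neg_le_one_sub_add_sq {x : ℝ} (hx : 0 ≤ x) : Real.exp (-x) ≤ 1 - x + x ^ 2 := by
  rcases le_total x 1 with hx1 | hx1
  · have h := Real.abs_exp_sub_one_sub_id_le (x := -x) (by rwa [abs_neg, abs_of_nonneg hx])
    rw [neg_sq] at h
    linarith [le_abs_self (Real.exp (-x) - 1 - -x)]
  · nlinarith [Real.exp_le_one_iff.2 (neg_nonpos.2 hx)]

section ProductBounds

variable {ι : Type*} {s : Finset ι} {x : ι → ℝ}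

lemma one_sub_prod_le_sum_one_sub (h0 : ∀ r ∈ s, 0 ≤ x r) (h1 : ∀ r ∈ s, x r ≤ 1) :
    1 - ∏ r ∈ s, x r ≤ ∑ r ∈ s, (1 - x r) := by
  induction s using Finset.cons_induction with
  | empty => simp
  | cons a s _ ih =>
    rw [sum_cons, prod_cons]
    have h0' : ∀ r ∈ s, 0 ≤ x r := fun r hr => h0 r (mem_cons_of_mem hr)
    have h1' : ∀ r ∈ s, x r ≤ 1 := fun r hr => h1 r (mem_cons_of_mem hr)
    have hfactor : 0 ≤ (1 - x a) * (1 - ∏ r ∈ s, x r) :=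
      mul_nonneg (sub_nonneg.2 (h1 a (mem_cons_self a s))) (sub_nonneg.2 (prod_le_one h0' h1'))
    linarith [ih h0' h1']

lemma sum_mul_le_mul_sum_div {w y : ι → ℝ} {c : ℝ} (hw : ∀ r ∈ s, 0 < w r)
    (hy : ∀ r ∈ s, 0 ≤ y r) (hx : ∀ r ∈ s, w r * x r ≤ c) :
    ∑ r ∈ s, y r * x r ≤ c * ∑ r ∈ s, y r / w r := by
  rw [mul_sum]
  refine sum_le_sum fun r hr => ?_
  calc y r * x r = y r / w r * (w r * x r) := by field_simp [(hw r hr).ne']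
    _ ≤ y r / w r * c := mul_le_mul_of_nonneg_left (hx r hr) (div_nonneg (hy r hr) (hw r hr).le)
    _ = c * (y r / w r) := mul_comm _ _

variable {n : ι → ℕ} (hx0 : ∀ r ∈ s, 0 ≤ x r) (hx1 : ∀ r ∈ s, x r ≤ 1)
include hx0 hx1

lemma one_sub_prod_one_sub_pow_nonneg : 0 ≤ 1 - ∏ r ∈ s, (1 - x r) ^ n r :=
  sub_nonneg.2 <| prod_le_one (fun r hr => pow_nonneg (sub_nonneg.2 (hx1 r hr)) _)
    fun r hr => pow_le_one₀ (sub_nonneg.2 (hx1 r hr)) (by linarith [hx0 r hr])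

lemma one_sub_prod_one_sub_pow_le_sum : 1 - ∏ r ∈ s, (1 - x r) ^ n r ≤ ∑ r ∈ s, n r * x r :=
  calc 1 - ∏ r ∈ s, (1 - x r) ^ n r ≤ ∑ r ∈ s, (1 - (1 - x r) ^ n r) :=
        one_sub_prod_le_sum_one_sub (fun r hr => pow_nonneg (sub_nonneg.2 (hx1 r hr)) _)
          fun r hr => pow_le_one₀ (sub_nonneg.2 (hx1 r hr)) (by linarith [hx0 r hr])
    _ ≤ ∑ r ∈ s, n r * x r := sum_le_sum fun r hr => by
        have h := one_add_mul_le_pow (a := -x r) (by linarith [hx1 r hr]) (n r)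
        rw [← sub_eq_add_neg] at h
        linarith

lemma sum_sub_sq_le_one_sub_prod_one_sub_pow :
    ∑ r ∈ s, n r * x r - (∑ r ∈ s, n r * x r) ^ 2 ≤ 1 - ∏ r ∈ s, (1 - x r) ^ n r := by
  have hprod : ∏ r ∈ s, (1 - x r) ^ n r ≤ Real.exp (-∑ r ∈ s, n r * x r) := by
    rw [← sum_neg_distrib, Real.exp_sum]
    refine prod_le_prod (fun r hr => pow_nonneg (sub_nonneg.2 (hx1 r hr)) _) fun r hr => ?_
    rw [← mul_neg, Real.exp_nat_mul]
    exact pow_le_pow_left₀ (sub_nonneg.2 (hx1 r hr)) (Real.one_sub_le_exp_neg _) _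
  linarith [Real.exp_neg_le_one_sub_add_sq
    (sum_nonneg fun r hr => mul_nonneg (Nat.cast_nonneg (n r)) (hx0 r hr))]

lemma sum_sub_one_sub_prod_one_sub_pow_le_min {B : ℝ} (hB : ∑ r ∈ s, n r * x r ≤ B) :
    ∑ r ∈ s, n r * x r - (1 - ∏ r ∈ s, (1 - x r) ^ n r) ≤ min B (B ^ 2) := by
  have hsq := pow_le_pow_left₀
    (sum_nonneg fun r hr => mul_nonneg (Nat.cast_nonneg (n r)) (hx0 r hr)) hB 2
  refine le_min ((sub_le_self _ (one_sub_prod_one_sub_pow_nonneg hx0 hx1)).trans hB) ?_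
  linarith [sum_sub_sq_le_one_sub_prod_one_sub_pow (n := n) hx0 hx1]

end ProductBounds

lemma integrable_prod_pow {Ω ι : Type*} [MeasurableSpace Ω] {μ : Measure Ω} [IsFiniteMeasure μ]
    (s : Finset ι) {b : ι → ℝ} (hb : ∀ r ∈ s, |b r| ≤ 1) {N : ι → Ω → ℕ}
    (hN : ∀ r ∈ s, AEMeasurable (N r) μ) : Integrable (fun ω => ∏ r ∈ s, b r ^ N r ω) μ := by
  refine .of_bound (s.aemeasurable_fun_prod fun r hr =>
    measurable_from_top.comp_aemeasurable (hN r hr)).aestronglyMeasurable 1 (ae_of_all _ fun ω => ?_)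
  rw [Real.norm_eq_abs, abs_prod]
  exact prod_le_one (fun _ _ => abs_nonneg _) fun r hr => by
    rw [abs_pow]; exact pow_le_one₀ (abs_nonneg _) (hb r hr)

lemma tendsto_integral_div_of_le_min_mul_sq {Ω α : Type*} [MeasurableSpace Ω] {μ : Measure Ω}
    {l : Filter α} [l.IsCountablyGenerated] {q : α → ℝ} (hq_pos : ∀ i, 0 < q i)
    (hq : Tendsto q l (nhds 0)) {C : Ω → ℝ} (hC : Integrable C μ) {D : α → Ω → ℝ}
    (hD_meas : ∀ i, AEStronglyMeasurable (D i) μ) (hD_nonneg : ∀ i ω, 0 ≤ D i ω)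
    (hD_le : ∀ i ω, D i ω ≤ min (q i * C ω) ((q i * C ω) ^ 2)) :
    Tendsto (fun i => (∫ ω, D i ω ∂μ) / q i) l (nhds 0) := by
  simp_rw [← integral_div]
  have hnonneg : ∀ i ω, 0 ≤ D i ω / q i := fun i ω => div_nonneg (hD_nonneg i ω) (hq_pos i).le
  have hbound : ∀ i ω, D i ω / q i ≤ C ω := fun i ω =>
    (div_le_iff₀' (hq_pos i)).2 (le_min_iff.1 (hD_le i ω)).1
  have hsmall : ∀ i ω, D i ω / q i ≤ q i * C ω ^ 2 := fun i ω =>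
    (div_le_iff₀ (hq_pos i)).2 ((le_min_iff.1 (hD_le i ω)).2.trans_eq (by ring))
  simpa using tendsto_integral_filter_of_dominated_convergence (F := fun i ω => D i ω / q i) C
    (.of_forall fun i => (hD_meas i).mul_const (q i)⁻¹)
    (.of_forall fun i => ae_of_all _ fun ω => (abs_of_nonneg (hnonneg i ω)).trans_le (hbound i ω))
    hC (ae_of_all _ fun ω => squeeze_zero (hnonneg · ω) (hsmall · ω)
      (by simpa using hq.mul_const (C ω ^ 2)))

theorem lemma_cycle_request_probability_asymptotic_general
    {Ω : Type*} [MeasurableSpace Ω] (μ : Measure Ω) [IsProbabilityMeasure μ]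
    (M : ℕ)
    (N : Fin M → Ω → ℕ)
    (hN_int : ∀ r, Integrable (fun ω => (N r ω : ℝ)) μ)
    (ET : ℝ) (hET : 0 < ET)
    (π : Fin M → ℝ) (hπ_pos : ∀ r, 0 < π r)
    (hEN : ∀ r, ∫ ω, (N r ω : ℝ) ∂μ = π r * ET)
    (qr : Fin M → ℕ → ℝ) (hqr : ∀ r i, 0 ≤ qr r i ∧ qr r i ≤ 1)
    (q : ℕ → ℝ) (hq_def : ∀ i, q i = ∑ r, π r * qr r i)
    (hq_pos : ∀ i, 0 < q i)
    (hq_zero : Tendsto q atTop (nhds 0)) :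
    Tendsto (fun i : ℕ =>
        (∫ ω, (1 - ∏ r, (1 - qr r i) ^ (N r ω)) ∂μ) / (q i * ET))
      atTop (nhds 1) := by
  set P : ℕ → Ω → ℝ := fun i ω => ∏ r, (1 - qr r i) ^ N r ω
  set S : ℕ → Ω → ℝ := fun i ω => ∑ r, (N r ω : ℝ) * qr r i
  have hx0 i : ∀ r ∈ univ, 0 ≤ qr r i := fun r _ => (hqr r i).1
  have hx1 i : ∀ r ∈ univ, qr r i ≤ 1 := fun r _ => (hqr r i).2
  have hS_le i ω : S i ω ≤ q i * ∑ r, (N r ω : ℝ) / π r :=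
    sum_mul_le_mul_sum_div (fun r _ => hπ_pos r) (fun r _ => Nat.cast_nonneg _) fun r _ =>
      hq_def i ▸ single_le_sum (f := fun r => π r * qr r i)
        (fun r _ => mul_nonneg (hπ_pos r).le (hqr r i).1) (mem_univ r)
  have hS_int i : Integrable (S i) μ := integrable_finsetSum _ fun r _ => (hN_int r).mul_const _
  have h1P_int i : Integrable (fun ω => 1 - P i ω) μ :=
    (integrable_const 1).sub <| integrable_prod_pow _
      (fun r _ => abs_le.2 ⟨by linarith [hqr r i], by linarith [hqr r i]⟩)
      fun r _ => (hN_int r).aemeasurable.of_natCast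
  have hES i : ∫ ω, S i ω ∂μ = q i * ET := by
    simp only [S, integral_finsetSum _ fun r _ => (hN_int r).mul_const _, integral_mul_const,
      hEN, hq_def, sum_mul]
    exact sum_congr rfl fun r _ => by ring
  have hD : Tendsto (fun i => (∫ ω, S i ω - (1 - P i ω) ∂μ) / q i) atTop (nhds 0) :=
    tendsto_integral_div_of_le_min_mul_sq hq_pos hq_zero
      (integrable_finsetSum _ fun r _ => (hN_int r).div_const _)
      (fun i => ((hS_int i).sub (h1P_int i)).aestronglyMeasurable)
      (fun i ω => sub_nonneg.2 (one_sub_prod_one_sub_pow_le_sum (hx0 i) (hx1 i)))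
      (fun i ω => sum_sub_one_sub_prod_one_sub_pow_le_min (hx0 i) (hx1 i) (hS_le i ω))
  have hratio i : (∫ ω, 1 - P i ω ∂μ) / (q i * ET) =
      1 - (∫ ω, S i ω - (1 - P i ω) ∂μ) / q i / ET := by
    rw [integral_sub (hS_int i) (h1P_int i), hES]
    field_simp [(hq_pos i).ne', hET.ne']
    ring
  refine (tendsto_congr hratio).2 ?_
  simpa using (tendsto_const_nhds (x := (1 : ℝ))).sub (hD.div_const ET)

/-- Lemma 1 of the paper: in the semi-Markov modulated request model, the probability
that document `i` is requested during a regenerative cycle, which by conditional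
independence of requests given the modulating process equals
`E[1 - ∏_r (1 - q_i^{(r)})^(N_r)]` (with `N_r` the number of Poisson request points
while in state `r` during the cycle, `E[N_r] = π_r E[𝒯₂-𝒯₁]`), satisfies
`P[i ∈ 𝓡(𝒯₁,𝒯₂)] ∼ q_i E[𝒯₂-𝒯₁]` as `i → ∞`. -/
theorem lemma_cycle_request_probability_asymptotic
    {Ω : Type*} [MeasurableSpace Ω] (μ : Measure Ω) [IsProbabilityMeasure μ]
    (M : ℕ) (hM : 0 < M)
    (N : Fin M → Ω → ℕ) (hN_meas : ∀ r, Measurable (N r))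
    (hN_int : ∀ r, Integrable (fun ω => (N r ω : ℝ)) μ)
    (ET : ℝ) (hET : 0 < ET)
    (π : Fin M → ℝ) (hπ_pos : ∀ r, 0 < π r) (hπ_sum : ∑ r, π r = 1)
    (hEN : ∀ r, ∫ ω, (N r ω : ℝ) ∂μ = π r * ET)
    (qr : Fin M → ℕ → ℝ) (hqr : ∀ r i, 0 ≤ qr r i ∧ qr r i ≤ 1)
    (q : ℕ → ℝ) (hq_def : ∀ i, q i = ∑ r, π r * qr r i)
    (hq_pos : ∀ i, 0 < q i) (hq_mono : Antitone q)
    (hq_zero : Tendsto q atTop (nhds 0)) :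
    Tendsto (fun i : ℕ =>
        (∫ ω, (1 - ∏ r, (1 - qr r i) ^ (N r ω)) ∂μ) / (q i * ET))
      atTop (nhds 1) :=
  lemma_cycle_request_probability_asymptotic_general μ M N hN_int ET hET π hπ_pos hEN qr hqr q
    hq_def hq_pos hq_zero
end

section
/- Let q : ℕ → ℝ>0 be nonincreasing and summable, ε ∈ (0,1), i₀ ∈ ℕ, and let p : ℕ → ℝ≥0 satisfy (1-ε) c q_i < p_i < (1+ε) c q_i for all i ≥ i₀ and some c > 0. Then for every x ≥ i₀ and every finite set C ⊆ {i₀+1, i₀+2, …} with |C| = x - i₀ obtained by replacing elements of {i₀+1,…,x} with elements of {x+1, x+2, …}, one has ∑_{i = i₀+1}^{x} p_i ≥ ((1-ε)/(1+ε)) ∑_{i ∈ C} p_i. -/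
/-!
Every cached index lies above `i₀`, so the `k`-th smallest element of `C` is at least `i₀ + 1 + k`;
as `q` is nonincreasing, the `q`-mass of `C` is therefore at most that of the prefix
`{i₀+1, …, x}` of the same size. The two-sided bounds `(1 - ε) c q ≤ p ≤ (1 + ε) c q` transfer
this comparison to `p` at the cost of the factor `(1 + ε) / (1 - ε)`.
-/

open Finset

theorem Antitone.sum_le_sum_Ico {M : Type*} [AddCommMonoid M] [PartialOrder M]
    [IsOrderedAddMonoid M] {f : ℕ → M} (hf : Antitone f) {a : ℕ} {C : Finset ℕ}
    (hC : ∀ i ∈ C, a ≤ i) : ∑ i ∈ C, f i ≤ ∑ i ∈ Ico a (a + #C), f i := by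
  induction C using Finset.induction_on_max with
  | empty => simp
  | insert m s hlt ih =>
    have hm : m ∉ s := fun h => lt_irrefl m (hlt m h)
    have hs : s ⊆ Ico a m := fun i hi => mem_Ico.2 ⟨hC i (mem_insert_of_mem hi), hlt i hi⟩
    have hcard : a + #s ≤ m := by
      have hs_card := card_le_card hs
      rw [Nat.card_Ico] at hs_card
      have := hC m (mem_insert_self m s)
      omega
    rw [sum_insert hm, card_insert_of_notMem hm, ← add_assoc, sum_Ico_succ_top (by omega),
      add_comm]
    exact add_le_add (ih fun i hi => hC i (mem_insert_of_mem hi)) (hf hcard)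

theorem exchange_inequality_general
    (q : ℕ → ℝ) (hq_mono : Antitone q)
    (ε : ℝ) (hε0 : 0 < ε) (hε1 : ε < 1)
    (i₀ : ℕ) (c : ℝ) (hc : 0 < c)
    (p : ℕ → ℝ)
    (hp : ∀ i, i₀ ≤ i → (1 - ε) * c * q i < p i ∧ p i < (1 + ε) * c * q i)
    (x : ℕ) (hx : i₀ ≤ x)
    (C : Finset ℕ) (hC_sub : ∀ i ∈ C, i₀ < i) (hC_card : C.card = x - i₀) :
    ((1 - ε) / (1 + ε)) * ∑ i ∈ C, p i ≤ ∑ i ∈ Finset.Icc (i₀ + 1) x, p i := by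
  have hprefix : Icc (i₀ + 1) x = Ico (i₀ + 1) (i₀ + 1 + #C) := by
    rw [hC_card, ← Ico_add_one_right_eq_Icc]
    congr 1
    omega
  have hq : ∑ i ∈ C, q i ≤ ∑ i ∈ Icc (i₀ + 1) x, q i :=
    hprefix ▸ hq_mono.sum_le_sum_Ico hC_sub
  have hp_C : ∑ i ∈ C, p i ≤ (1 + ε) * c * ∑ i ∈ C, q i := by
    rw [mul_sum]
    exact sum_le_sum fun i hi => (hp i (hC_sub i hi).le).2.le
  have hp_prefix : (1 - ε) * c * ∑ i ∈ Icc (i₀ + 1) x, q i ≤ ∑ i ∈ Icc (i₀ + 1) x, p i := by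
    rw [mul_sum]
    exact sum_le_sum fun i hi => (hp i (by grind)).1.le
  calc (1 - ε) / (1 + ε) * ∑ i ∈ C, p i
      ≤ (1 - ε) / (1 + ε) * ((1 + ε) * c * ∑ i ∈ C, q i) := by gcongr
    _ = (1 - ε) * c * ∑ i ∈ C, q i := by field_simp
    _ ≤ (1 - ε) * c * ∑ i ∈ Icc (i₀ + 1) x, q i := by gcongr
    _ ≤ ∑ i ∈ Icc (i₀ + 1) x, p i := hp_prefix

/-- Exchange-argument inequality: swapping cached documents from the prefix
`{i₀+1,…,x}` for documents indexed above `i₀` (in particular above `x`) cannot increase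
the sum of cycle-request probabilities by more than a factor `(1+ε)/(1-ε)`. -/
theorem exchange_inequality
    (q : ℕ → ℝ) (hq_mono : Antitone q) (hq_pos : ∀ i, 0 < q i) (hq_sum : Summable q)
    (ε : ℝ) (hε0 : 0 < ε) (hε1 : ε < 1)
    (i₀ : ℕ) (c : ℝ) (hc : 0 < c)
    (p : ℕ → ℝ) (hp_nonneg : ∀ i, 0 ≤ p i)
    (hp : ∀ i, i₀ ≤ i → (1 - ε) * c * q i < p i ∧ p i < (1 + ε) * c * q i)
    (x : ℕ) (hx : i₀ ≤ x)
    (C : Finset ℕ) (hC_sub : ∀ i ∈ C, i₀ < i) (hC_card : C.card = x - i₀) :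
    ((1 - ε) / (1 + ε)) * ∑ i ∈ C, p i ≤ ∑ i ∈ Finset.Icc (i₀ + 1) x, p i :=
  exchange_inequality_general q hq_mono ε hε0 hε1 i₀ c hc p hp x hx C hC_sub hC_card
end
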